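/- Let E be a real inner product space and let p ≥ 2 be a real number. Then for all a, b ∈ E, ⟨Φ_p(a) − Φ_p(b), a − b⟩ ≥ 2^{2−p} · ‖a − b‖^p. -/
import Mathlib


open scoped RealInnerProductSpace

open Classical in
/-- The p-Laplacian vector field `Φ_p(a) = ‖a‖^(p-2) a` (with `Φ_p(0) = 0`). -/
noncomputable def pLapField {E : Type*} [NormedAddCommGroup E] [InnerProductSpace ℝ E]
    (p : ℝ) (a : E) : E :=
  if a = 0 then 0 else ‖a‖ ^ (p - 2) • a

private lemma pLapField_eq {E : Type*} [NormedAddCommGroup E] [InnerProductSpace ℝ E]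
    (p : ℝ) (a : E) : pLapField p a = ‖a‖ ^ (p - 2) • a := by
  unfold pLapField
  split_ifs with h
  · simp [h]
  · rfl

private lemma two_rpow_aux {r : ℝ} (x y : ℝ) (hx : 0 ≤ x) (hy : 0 ≤ y) (hr : 1 ≤ r) :
    (x + y) ^ r ≤ 2 ^ (r - 1) * (x ^ r + y ^ r) := by
  have h := NNReal.rpow_add_le_mul_rpow_add_rpow ⟨x, hx⟩ ⟨y, hy⟩ hr
  have h2 := (NNReal.coe_le_coe).2 h
  push_cast [NNReal.coe_rpow] at h2
  exact h2

private lemma mul_rpow_sub_two {p : ℝ} (hp : 2 ≤ p) {x : ℝ} (hx : 0 ≤ x) :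
    x * x ^ (p - 2) = x ^ (p - 1) := by
  rcases eq_or_lt_of_le hx with h | h
  · rw [← h, Real.zero_rpow (by linarith : p - 1 ≠ 0)]; ring
  · rw [show p - 1 = p - 2 + 1 by ring, Real.rpow_add_one h.ne']; ring

private lemma scalar_key {p : ℝ} (hp : 2 ≤ p) (x y D t : ℝ)
    (hx : 0 ≤ x) (hy : 0 ≤ y) (hD0 : 0 ≤ D)
    (hD2 : D ^ 2 = x ^ 2 + y ^ 2 - 2 * t) (hDs : D ≤ x + y) :
    (2 : ℝ) ^ (2 - p) * D ^ p ≤ x ^ (p - 2) * (x ^ 2 - t) + y ^ (p - 2) * (y ^ 2 - t) := by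
  have hq : (0 : ℝ) ≤ p - 2 := by linarith
  set X : ℝ := x ^ (p - 2) with hXdef
  set Y : ℝ := y ^ (p - 2) with hYdef
  have hX0 : 0 ≤ X := Real.rpow_nonneg hx _
  have hY0 : 0 ≤ Y := Real.rpow_nonneg hy _
  have hkey : X * (x ^ 2 - t) + Y * (y ^ 2 - t)
      = ((X - Y) * (x ^ 2 - y ^ 2) + (X + Y) * D ^ 2) / 2 := by
    rw [hD2]; ring
  rw [hkey]
  have hA0 : 0 ≤ (X - Y) * (x ^ 2 - y ^ 2) := by
    rcases le_total x y with h | h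
    · have h1 : X ≤ Y := Real.rpow_le_rpow hx h hq
      have h2 : x ^ 2 ≤ y ^ 2 := by nlinarith
      nlinarith
    · have h1 : Y ≤ X := Real.rpow_le_rpow hy h hq
      have h2 : y ^ 2 ≤ x ^ 2 := by nlinarith
      nlinarith
  rcases eq_or_lt_of_le hD0 with hD | hD
  · rw [← hD, Real.zero_rpow (by positivity : p ≠ 0)]
    have h1 : 0 ≤ (X + Y) * D ^ 2 := by positivity
    nlinarith
  · set s : ℝ := x + y with hsdef
    have hs : 0 < s := lt_of_lt_of_le hD hDs
    have h2pos : (0 : ℝ) < (2 : ℝ) ^ (2 - p) := Real.rpow_pos_of_pos (by norm_num) _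
    have hDp : D ^ p = D ^ (p - 2) * D ^ 2 := by
      rw [← Real.rpow_natCast D 2, ← Real.rpow_add hD]
      norm_num
    have hDq : D ^ (p - 2) ≤ s ^ (p - 2) := Real.rpow_le_rpow hD0 hDs hq
    set c : ℝ := (2 : ℝ) ^ (2 - p) * s ^ (p - 2) with hcdef
    have hc0 : 0 ≤ c := by positivity
    have step1 : (2 : ℝ) ^ (2 - p) * D ^ p ≤ c * D ^ 2 := by
      rw [hDp, hcdef]
      have := mul_le_mul_of_nonneg_right
        (mul_le_mul_of_nonneg_left hDq h2pos.le) (sq_nonneg D)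
      nlinarith [this]
    have hxX : x * X = x ^ (p - 1) := mul_rpow_sub_two hp hx
    have hyY : y * Y = y ^ (p - 1) := mul_rpow_sub_two hp hy
    have hconv : s ^ (p - 1) ≤ 2 ^ (p - 2) * (x ^ (p - 1) + y ^ (p - 1)) := by
      have h := two_rpow_aux x y hx hy (by linarith : 1 ≤ p - 1)
      rwa [show p - 1 - 1 = p - 2 by ring] at h
    have hsp : c * s ^ 2 ≤ s * (x ^ (p - 1) + y ^ (p - 1)) := by
      have e1 : s ^ (p - 2) * s ^ 2 = s * s ^ (p - 1) := by
        rw [← Real.rpow_natCast s 2, ← Real.rpow_add hs,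
          show p - 2 + ((2 : ℕ) : ℝ) = 1 + (p - 1) by push_cast; ring,
          Real.rpow_add hs, Real.rpow_one]
      have h2 : (2 : ℝ) ^ (2 - p) * s ^ (p - 1) ≤ x ^ (p - 1) + y ^ (p - 1) := by
        have h3 : (2 : ℝ) ^ (2 - p) * (2 : ℝ) ^ (p - 2) = 1 := by
          rw [← Real.rpow_add (by norm_num : (0:ℝ) < 2)]
          norm_num
        calc (2 : ℝ) ^ (2 - p) * s ^ (p - 1)
            ≤ (2 : ℝ) ^ (2 - p) * ((2:ℝ) ^ (p - 2) * (x ^ (p - 1) + y ^ (p - 1))) :=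
              mul_le_mul_of_nonneg_left hconv h2pos.le
          _ = (2 : ℝ) ^ (2 - p) * (2 : ℝ) ^ (p - 2) * (x ^ (p - 1) + y ^ (p - 1)) := by ring
          _ = x ^ (p - 1) + y ^ (p - 1) := by rw [h3]; ring
      calc c * s ^ 2 = (2 : ℝ) ^ (2 - p) * (s ^ (p - 2) * s ^ 2) := by rw [hcdef]; ring
        _ = s * ((2 : ℝ) ^ (2 - p) * s ^ (p - 1)) := by rw [e1]; ring
        _ ≤ s * (x ^ (p - 1) + y ^ (p - 1)) := mul_le_mul_of_nonneg_left h2 hs.le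
    have hform : s * (x ^ (p - 1) + y ^ (p - 1))
        = ((X - Y) * (x ^ 2 - y ^ 2) + (X + Y) * s ^ 2) / 2 := by
      rw [← hxX, ← hyY, hsdef]; ring
    have hAs : c * s ^ 2 ≤ ((X - Y) * (x ^ 2 - y ^ 2) + (X + Y) * s ^ 2) / 2 := by
      rw [← hform]; exact hsp
    have hDs2 : D ^ 2 ≤ s ^ 2 := pow_le_pow_left₀ hD0 hDs 2
    have final : c * D ^ 2 ≤ ((X - Y) * (x ^ 2 - y ^ 2) + (X + Y) * D ^ 2) / 2 := by
      rcases le_total c ((X + Y) / 2) with h | h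
      · have := mul_le_mul_of_nonneg_right h (sq_nonneg D)
        linarith
      · have := mul_le_mul_of_nonneg_left hDs2 (by linarith : 0 ≤ c - (X + Y) / 2)
        linarith
    linarith

/-- Strong monotonicity of the p-Laplacian vector field for `p ≥ 2`:
`⟨Φ_p(a) − Φ_p(b), a − b⟩ ≥ 2^(2−p) ‖a − b‖^p`. -/
theorem pLapField_strong_monotone {E : Type*} [NormedAddCommGroup E]
    [InnerProductSpace ℝ E] (p : ℝ) (hp : 2 ≤ p) (a b : E) :
    (2 : ℝ) ^ (2 - p) * ‖a - b‖ ^ p ≤ ⟪pLapField p a - pLapField p b, a - b⟫ := by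
  have hD2 : ‖a - b‖ ^ 2 = ‖a‖ ^ 2 + ‖b‖ ^ 2 - 2 * ⟪a, b⟫ := by
    rw [norm_sub_sq_real]; ring
  have hinner : ⟪pLapField p a - pLapField p b, a - b⟫
      = ‖a‖ ^ (p - 2) * (‖a‖ ^ 2 - ⟪a, b⟫) + ‖b‖ ^ (p - 2) * (‖b‖ ^ 2 - ⟪a, b⟫) := by
    rw [pLapField_eq, pLapField_eq, inner_sub_left, inner_sub_right, inner_sub_right,
      real_inner_smul_left, real_inner_smul_left, real_inner_smul_left, real_inner_smul_left,
      real_inner_self_eq_norm_sq, real_inner_self_eq_norm_sq, real_inner_comm b a]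
    ring
  rw [hinner]
  exact scalar_key hp ‖a‖ ‖b‖ ‖a - b‖ ⟪a, b⟫ (norm_nonneg _) (norm_nonneg _)
    (norm_nonneg _) hD2 (norm_sub_le a b)
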